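/- arXiv:math/0009178 — 10 statements merged into one kernel-verified Lean document; each statement's English description precedes it below -/
import Mathlib

section
/- For K = 1 and for K = p/q, the matrix R̂(K;p,q) satisfies the braid equation R̂₁₂R̂₂₃R̂₁₂ = R̂₂₃R̂₁₂R̂₂₃. -/
open Matrix Kronecker

noncomputable section

/-- Row-major identification of `Fin 2 × Fin 2` with `Fin 4`. -/
def e22 : Fin 2 × Fin 2 ≃ Fin 4 := finProdFinEquiv

/-- View a 4×4 matrix as acting on `V ⊗ V` with `V` 2-dimensional. -/
def toTensor {F : Type*} (M : Matrix (Fin 4) (Fin 4) F) :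
    Matrix (Fin 2 × Fin 2) (Fin 2 × Fin 2) F :=
  Matrix.reindex e22.symm e22.symm M

/-- `M₁₂ = M ⊗ I₂` acting on `V ⊗ V ⊗ V`. -/
def m12 {F : Type*} [CommRing F] (M : Matrix (Fin 4) (Fin 4) F) :
    Matrix (Fin 2 × Fin 2 × Fin 2) (Fin 2 × Fin 2 × Fin 2) F :=
  Matrix.reindex (Equiv.prodAssoc _ _ _) (Equiv.prodAssoc _ _ _)
    (toTensor M ⊗ₖ (1 : Matrix (Fin 2) (Fin 2) F))

/-- `M₂₃ = I₂ ⊗ M` acting on `V ⊗ V ⊗ V`. -/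
def m23 {F : Type*} [CommRing F] (M : Matrix (Fin 4) (Fin 4) F) :
    Matrix (Fin 2 × Fin 2 × Fin 2) (Fin 2 × Fin 2 × Fin 2) F :=
  (1 : Matrix (Fin 2) (Fin 2) F) ⊗ₖ toTensor M

/-- The matrix `R̂(K;p,q)` of the standard biparametric deformation. -/
def Rpq {F : Type*} [Field F] (K p q : F) : Matrix (Fin 4) (Fin 4) F :=
  !![1, 0, 0, 0;
     0, 1 - K, K / p, 0;
     0, K * q, 1 - K * q / p, 0;
     0, 0, 0, 1]

set_option maxHeartbeats 40000000 in
theorem stmt3 {F : Type*} [Field F] (p q : F) (hp : p ≠ 0) (hq : q ≠ 0) :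
    (m12 (Rpq 1 p q) * m23 (Rpq 1 p q) * m12 (Rpq 1 p q) =
      m23 (Rpq 1 p q) * m12 (Rpq 1 p q) * m23 (Rpq 1 p q)) ∧
    (m12 (Rpq (p / q) p q) * m23 (Rpq (p / q) p q) * m12 (Rpq (p / q) p q) =
      m23 (Rpq (p / q) p q) * m12 (Rpq (p / q) p q) * m23 (Rpq (p / q) p q)) := by
  constructor <;>
  · ext ⟨i, j, k⟩ ⟨i', j', k'⟩
    fin_cases i <;> fin_cases j <;> fin_cases k <;>
      fin_cases i' <;> fin_cases j' <;> fin_cases k' <;>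
    · simp [Matrix.mul_apply, m12, m23, toTensor, Rpq, e22, Fintype.sum_prod_type,
        Fin.sum_univ_two, finProdFinEquiv, Matrix.one_apply, Matrix.vecHead, Matrix.vecTail]
      try field_simp
      try ring
end
end

section
/- The matrix R̂(K;p,q) satisfies the generalized Hecke condition R̂² = X·R̂ + (1−X)·I₄ with X = 2 − K(1 + q/p). -/
open Matrix Kronecker

noncomputable section

theorem stmt4 {F : Type*} [Field F] (K p q : F) (hp : p ≠ 0) :
    Rpq K p q * Rpq K p q =
      (2 - K * (1 + q / p)) • Rpq K p q +
        (1 - (2 - K * (1 + q / p))) • (1 : Matrix (Fin 4) (Fin 4) F) := by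
  ext i j
  simp [Rpq, Matrix.mul_apply, Fin.sum_univ_four, Matrix.one_apply]
  fin_cases i <;> fin_cases j <;> simp <;> field_simp <;> ring
end
end

section
/- The matrix R̂(K;g,h) satisfies R̂² = X·R̂ + (1−X)·I₄ with X = 2(1−K). -/
open Matrix Kronecker

noncomputable section

/-- The matrix `R̂(K;g,h)` of the nonstandard biparametric deformation. -/
def Rgh {F : Type*} [CommRing F] (K g h : F) : Matrix (Fin 4) (Fin 4) F :=
  !![1, -h * K, h * K, g * h * K;
     0, 1 - K, K, g * K;
     0, K, 1 - K, -g * K;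
     0, 0, 0, 1]

theorem stmt5 {F : Type*} [CommRing F] (K g h : F) :
    Rgh K g h * Rgh K g h =
      (2 * (1 - K)) • Rgh K g h +
        (1 - 2 * (1 - K)) • (1 : Matrix (Fin 4) (Fin 4) F) := by
  ext i j
  simp only [Rgh, Matrix.mul_apply, Fin.sum_univ_four, Matrix.smul_apply, Matrix.add_apply,
    Matrix.one_apply, smul_eq_mul]
  fin_cases i <;> fin_cases j <;> simp [Matrix.vecHead, Matrix.vecTail] <;> ring
end
end

section
/- The matrix R̂(K;q,h) satisfies R̂² = X·R̂ + (1−X)·I₄ with X = 2 − K(1+q). -/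
open Matrix Kronecker

noncomputable section

/-- The matrix `R̂(K;q,h)` of the hybrid deformation of `GL(1/1)`. -/
def Rqh {F : Type*} [CommRing F] (K q h : F) : Matrix (Fin 4) (Fin 4) F :=
  !![1, 0, 0, K * h;
     0, 1 - K, K * q, 0;
     0, K, 1 - K * q, 0;
     0, 0, 0, 1 - K * (q + 1)]

theorem stmt6 {F : Type*} [CommRing F] (K q h : F) :
    Rqh K q h * Rqh K q h =
      (2 - K * (1 + q)) • Rqh K q h +
        (1 - (2 - K * (1 + q))) • (1 : Matrix (Fin 4) (Fin 4) F) := by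
  unfold Rqh
  ext i j
  fin_cases i <;> fin_cases j <;> simp [Matrix.mul_apply, Fin.sum_univ_succ, Matrix.one_apply, Matrix.vecHead, Matrix.vecTail] <;> ring
end
end

section
/- For R(K;p,q) = P·R̂(K;p,q) where P is the 4×4 permutation matrix swapping the middle two basis vectors, one has (21)R(K;p,q) = (R(K';p,q))⁻¹ where K' = K·(K(1+q/p) − 1)⁻¹ and (21)R denotes conjugation of R by P (i.e., the matrix of R with tensor factors flipped), provided K(1+q/p) − 1 is invertible. -/
open Matrix Kronecker

noncomputable section

/-- The 4×4 flip (permutation) matrix swapping the middle two basis vectors. -/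
def Pflip {F : Type*} [Field F] : Matrix (Fin 4) (Fin 4) F :=
  !![1, 0, 0, 0;
     0, 0, 1, 0;
     0, 1, 0, 0;
     0, 0, 0, 1]

/-!
`R̂(K) = 1 - K • E` where `E` is the rank-one matrix `u vᵀ` on the middle block, with
`u = (1, -q)` and `v = (1, -1/p)`. Hence `E² = (vᵀu) • E = (1 + q/p) • E`, so the family `R̂(K)`
multiplies like `(1 - K • E)(1 - K' • E) = 1 - (K + K' - K K' (1 + q/p)) • E`, and
`K' = K / (K (1 + q/p) - 1)` is exactly the value that makes the coefficient vanish. Since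
`P² = 1`, `(21)R(K) = R̂(K) P` and `R(K')⁻¹ = R̂(K')⁻¹ P`, so the claim is `R̂(K) R̂(K') = 1`.
-/

theorem one_sub_smul_mul_one_sub_smul {R A : Type*} [CommRing R] [Ring A] [Algebra R A]
    {N : A} {s : R} (hN : N * N = s • N) (a b : R) :
    (1 - a • N) * (1 - b • N) = 1 - (a + b - a * b * s) • N := by
  simp only [sub_mul, mul_sub, one_mul, mul_one, smul_mul_smul_comm, hN, smul_smul]
  module

def Epq {F : Type*} [Field F] (p q : F) : Matrix (Fin 4) (Fin 4) F :=
  !![0, 0, 0, 0;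
     0, 1, -1 / p, 0;
     0, -q, q / p, 0;
     0, 0, 0, 0]

theorem Rpq_eq_one_sub_smul_Epq {F : Type*} [Field F] (K p q : F) :
    Rpq K p q = 1 - K • Epq p q := by
  ext i j
  fin_cases i <;> fin_cases j <;> simp [Rpq, Epq, one_apply] <;> ring

theorem Epq_mul_self {F : Type*} [Field F] (p q : F) :
    Epq p q * Epq p q = (1 + q / p) • Epq p q := by
  ext i j
  fin_cases i <;> fin_cases j <;> simp [Epq, mul_apply, Fin.sum_univ_four] <;> ring

theorem Rpq_mul_Rpq_of_add_eq {F : Type*} [Field F] {K K' p q : F}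
    (h : K + K' = K * K' * (1 + q / p)) : Rpq K p q * Rpq K' p q = 1 := by
  rw [Rpq_eq_one_sub_smul_Epq, Rpq_eq_one_sub_smul_Epq,
    one_sub_smul_mul_one_sub_smul (Epq_mul_self p q), h, sub_self, zero_smul, sub_zero]

theorem add_div_mul_sub_one {F : Type*} [Field F] {K s : F} (hK : K * s - 1 ≠ 0) :
    K + K / (K * s - 1) = K * (K / (K * s - 1)) * s := by
  field_simp
  ring

theorem Pflip_mul_self {F : Type*} [Field F] :
    (Pflip : Matrix (Fin 4) (Fin 4) F) * Pflip = 1 := by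
  ext i j
  fin_cases i <;> fin_cases j <;> simp [Pflip, mul_apply, Fin.sum_univ_four, one_apply]

theorem stmt8_general {F : Type*} [Field F] (K p q : F)
    (hK : K * (1 + q / p) - 1 ≠ 0) :
    Pflip * (Pflip * Rpq K p q) * Pflip =
      (Pflip * Rpq (K / (K * (1 + q / p) - 1)) p q)⁻¹ := by
  have hR := Rpq_mul_Rpq_of_add_eq (add_div_mul_sub_one hK)
  rw [← Matrix.mul_assoc, Pflip_mul_self, Matrix.one_mul]
  refine (Matrix.inv_eq_left_inv ?_).symm
  rw [Matrix.mul_assoc, ← Matrix.mul_assoc Pflip, Pflip_mul_self, Matrix.one_mul, hR]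

theorem stmt8 {F : Type*} [Field F] (K p q : F) (hp : p ≠ 0)
    (hK : K * (1 + q / p) - 1 ≠ 0) :
    Pflip * (Pflip * Rpq K p q) * Pflip =
      (Pflip * Rpq (K / (K * (1 + q / p) - 1)) p q)⁻¹ :=
  stmt8_general K p q hK
end
end

section
/- The matrix R̂(K;p,q) is an involution (R̂² = I₄) if and only if K(p+q) = 2p, assuming p+q ≠ 0 and K ≠ 0; in particular for K = 2p/(p+q) the matrix R̂(K;p,q) satisfies R̂² = I₄. -/
open Matrix Kronecker

noncomputable section

theorem stmt9 {F : Type*} [Field F] (p q K : F) (hp : p ≠ 0)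
    (hpq : p + q ≠ 0) (hK : K ≠ 0) :
    (Rpq K p q * Rpq K p q = 1 ↔ K * (p + q) = 2 * p) ∧
    Rpq (2 * p / (p + q)) p q * Rpq (2 * p / (p + q)) p q = 1 := by

  have key : ∀ K' : F, K' ≠ 0 → (Rpq K' p q * Rpq K' p q = 1 ↔ K' * (p + q) = 2 * p) := by
    intro K hK
    constructor
    · intro h
      have h11 := congr_fun (congr_fun h 1) 1
      simp [Rpq, Matrix.mul_apply, Fin.sum_univ_four, Matrix.one_apply] at h11
      field_simp at h11
      refine mul_left_cancel₀ hK ?_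
      linear_combination h11
    · intro h
      have hq : q = 2 * p / K - p := by field_simp; linear_combination h
      subst hq
      ext i j
      fin_cases i <;> fin_cases j <;>
        simp [Rpq, Matrix.mul_apply, Fin.sum_univ_four, Matrix.one_apply,
          Matrix.vecHead, Matrix.vecTail] <;>
        field_simp <;> ring
  refine ⟨key K hK, ?_⟩
  by_cases h2 : (2 : F) * p / (p + q) = 0
  · rw [h2]
    have : Rpq (0 : F) p q = 1 := by
      ext i j
      fin_cases i <;> fin_cases j <;>
        simp [Rpq, Matrix.one_apply, Matrix.vecHead, Matrix.vecTail]
    rw [this, one_mul]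
  · rw [key _ h2]
    field_simp
end
end

section
/- For K = 1 the matrix R̂(K;g,h) satisfies both the braid equation and R̂² = I₄ (triangularity coincides with the Yang–Baxter property in the nonstandard case). -/
open Matrix Kronecker

noncomputable section

def e8 : Fin 2 × Fin 2 × Fin 2 ≃ Fin 8 :=
  ((Equiv.refl (Fin 2)).prodCongr finProdFinEquiv).trans finProdFinEquiv

@[simp] lemma vec8_at_0 {α : Type*} (a b c d e f g h : α) : ![a,b,c,d,e,f,g,h] (0 : Fin 8) = a := rfl
@[simp] lemma vec8_mk_0 {α : Type*} (a b c d e f g h : α) : ![a,b,c,d,e,f,g,h] (⟨0, by norm_num⟩ : Fin 8) = a := rfl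
@[simp] lemma vec8_at_1 {α : Type*} (a b c d e f g h : α) : ![a,b,c,d,e,f,g,h] (1 : Fin 8) = b := rfl
@[simp] lemma vec8_mk_1 {α : Type*} (a b c d e f g h : α) : ![a,b,c,d,e,f,g,h] (⟨1, by norm_num⟩ : Fin 8) = b := rfl
@[simp] lemma vec8_at_2 {α : Type*} (a b c d e f g h : α) : ![a,b,c,d,e,f,g,h] (2 : Fin 8) = c := rfl
@[simp] lemma vec8_mk_2 {α : Type*} (a b c d e f g h : α) : ![a,b,c,d,e,f,g,h] (⟨2, by norm_num⟩ : Fin 8) = c := rfl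
@[simp] lemma vec8_at_3 {α : Type*} (a b c d e f g h : α) : ![a,b,c,d,e,f,g,h] (3 : Fin 8) = d := rfl
@[simp] lemma vec8_mk_3 {α : Type*} (a b c d e f g h : α) : ![a,b,c,d,e,f,g,h] (⟨3, by norm_num⟩ : Fin 8) = d := rfl
@[simp] lemma vec8_at_4 {α : Type*} (a b c d e f g h : α) : ![a,b,c,d,e,f,g,h] (4 : Fin 8) = e := rfl
@[simp] lemma vec8_mk_4 {α : Type*} (a b c d e f g h : α) : ![a,b,c,d,e,f,g,h] (⟨4, by norm_num⟩ : Fin 8) = e := rfl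
@[simp] lemma vec8_at_5 {α : Type*} (a b c d e f g h : α) : ![a,b,c,d,e,f,g,h] (5 : Fin 8) = f := rfl
@[simp] lemma vec8_mk_5 {α : Type*} (a b c d e f g h : α) : ![a,b,c,d,e,f,g,h] (⟨5, by norm_num⟩ : Fin 8) = f := rfl
@[simp] lemma vec8_at_6 {α : Type*} (a b c d e f g h : α) : ![a,b,c,d,e,f,g,h] (6 : Fin 8) = g := rfl
@[simp] lemma vec8_mk_6 {α : Type*} (a b c d e f g h : α) : ![a,b,c,d,e,f,g,h] (⟨6, by norm_num⟩ : Fin 8) = g := rfl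
@[simp] lemma vec8_at_7 {α : Type*} (a b c d e f g h : α) : ![a,b,c,d,e,f,g,h] (7 : Fin 8) = h := rfl
@[simp] lemma vec8_mk_7 {α : Type*} (a b c d e f g h : α) : ![a,b,c,d,e,f,g,h] (⟨7, by norm_num⟩ : Fin 8) = h := rfl

lemma e8s_0 : e8.symm 0 = (0,0,0) := rfl
lemma e8s_1 : e8.symm 1 = (0,0,1) := rfl
lemma e8s_2 : e8.symm 2 = (0,1,0) := rfl
lemma e8s_3 : e8.symm 3 = (0,1,1) := rfl
lemma e8s_4 : e8.symm 4 = (1,0,0) := rfl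
lemma e8s_5 : e8.symm 5 = (1,0,1) := rfl
lemma e8s_6 : e8.symm 6 = (1,1,0) := rfl
lemma e8s_7 : e8.symm 7 = (1,1,1) := rfl
lemma e22f_00 : e22 (0,0) = 0 := rfl
lemma e22f_01 : e22 (0,1) = 1 := rfl
lemma e22f_10 : e22 (1,0) = 2 := rfl
lemma e22f_11 : e22 (1,1) = 3 := rfl
lemma e22z : e22 0 = 0 := rfl
lemma e22o : e22 1 = 3 := rfl

def mA {F : Type*} [CommRing F] (g h : F) : Matrix (Fin 8) (Fin 8) F :=
  !![1,0,-h,0,h,0,g*h,0;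
     0,1,0,-h,0,h,0,g*h;
     0,0,0,0,1,0,g,0;
     0,0,0,0,0,1,0,g;
     0,0,1,0,0,0,-g,0;
     0,0,0,1,0,0,0,-g;
     0,0,0,0,0,0,1,0;
     0,0,0,0,0,0,0,1]

def mB {F : Type*} [CommRing F] (g h : F) : Matrix (Fin 8) (Fin 8) F :=
  !![1,-h,h,g*h,0,0,0,0;
     0,0,1,g,0,0,0,0;
     0,1,0,-g,0,0,0,0;
     0,0,0,1,0,0,0,0;
     0,0,0,0,1,-h,h,g*h;
     0,0,0,0,0,0,1,g;
     0,0,0,0,0,1,0,-g;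
     0,0,0,0,0,0,0,1]

lemma reindex_mul {F : Type*} [CommRing F] {n m : Type*} [Fintype n] [Fintype m]
    [DecidableEq n] [DecidableEq m] (e : n ≃ m) (A B : Matrix n n F) :
    Matrix.reindex e e (A * B) = Matrix.reindex e e A * Matrix.reindex e e B := by
  simp [Matrix.reindex_apply, Matrix.submatrix_mul_equiv]

set_option maxHeartbeats 1000000 in
lemma m12_eq {F : Type*} [CommRing F] (g h : F) :
    Matrix.reindex e8 e8 (m12 (Rgh 1 g h)) = mA g h := by
  ext i j
  fin_cases i <;> fin_cases j <;>
    · simp [m12, toTensor, Rgh, mA, Matrix.one_apply,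
        e8s_0, e8s_1, e8s_2, e8s_3, e8s_4, e8s_5, e8s_6, e8s_7,
        e22f_00, e22f_01, e22f_10, e22f_11, e22z, e22o, Matrix.vecHead, Matrix.vecTail]
      try rfl

set_option maxHeartbeats 1000000 in
lemma m23_eq {F : Type*} [CommRing F] (g h : F) :
    Matrix.reindex e8 e8 (m23 (Rgh 1 g h)) = mB g h := by
  ext i j
  fin_cases i <;> fin_cases j <;>
    · simp [m23, toTensor, Rgh, mB, Matrix.one_apply,
        e8s_0, e8s_1, e8s_2, e8s_3, e8s_4, e8s_5, e8s_6, e8s_7,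
        e22f_00, e22f_01, e22f_10, e22f_11, e22z, e22o, Matrix.vecHead, Matrix.vecTail]
      try rfl

set_option maxHeartbeats 2000000 in
lemma braid8 {F : Type*} [CommRing F] (g h : F) :
    mA g h * mB g h * mA g h = mB g h * mA g h * mB g h := by
  ext i j
  fin_cases i <;> fin_cases j <;>
    · simp only [mA, mB, Matrix.mul_apply, Fin.sum_univ_eight, Matrix.of_apply,
        vec8_at_0, vec8_at_1, vec8_at_2, vec8_at_3, vec8_at_4, vec8_at_5, vec8_at_6, vec8_at_7,
        vec8_mk_0, vec8_mk_1, vec8_mk_2, vec8_mk_3, vec8_mk_4, vec8_mk_5, vec8_mk_6, vec8_mk_7]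
      ring

set_option maxHeartbeats 1000000 in
theorem stmt10 {F : Type*} [CommRing F] (g h : F) :
    (m12 (Rgh 1 g h) * m23 (Rgh 1 g h) * m12 (Rgh 1 g h) =
      m23 (Rgh 1 g h) * m12 (Rgh 1 g h) * m23 (Rgh 1 g h)) ∧
    Rgh 1 g h * Rgh 1 g h = 1 := by
  constructor
  · have := congrArg (Matrix.reindex e8.symm e8.symm) (braid8 (F := F) g h)
    rw [← m12_eq, ← m23_eq, ← reindex_mul, ← reindex_mul, ← reindex_mul, ← reindex_mul] at this
    simpa using this
  · ext i j
    fin_cases i <;> fin_cases j <;>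
      · simp [Rgh, Matrix.mul_apply, Fin.sum_univ_four, Matrix.one_apply,
          Matrix.vecHead, Matrix.vecTail]
        try ring
end
end

section
/- Suppose a 4×4 matrix R̂ satisfies R̂₁₂R̂₂₃R̂₁₂ − R̂₂₃R̂₁₂R̂₂₃ = λ(R̂₂₃ − R̂₁₂) and R̂² = X·R̂ + (1−X)I. Then for any scalar μ, the matrix Ŝ = R̂ − μI satisfies Ŝ₁₂Ŝ₂₃Ŝ₁₂ − Ŝ₂₃Ŝ₁₂Ŝ₂₃ = (λ + Xμ − μ²)(Ŝ₂₃ − Ŝ₁₂). -/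
open Matrix Kronecker

noncomputable section

section Aux
variable {F : Type*} [CommRing F]

lemma toTensor_mul (M N : Matrix (Fin 4) (Fin 4) F) :
    toTensor (M * N) = toTensor M * toTensor N := by
  simp [toTensor, Matrix.reindex_apply, Matrix.submatrix_mul_equiv]

lemma toTensor_one : toTensor (1 : Matrix (Fin 4) (Fin 4) F) = 1 := by
  simp [toTensor]

lemma toTensor_sub (M N : Matrix (Fin 4) (Fin 4) F) :
    toTensor (M - N) = toTensor M - toTensor N := by
  ext i j; simp [toTensor]

lemma toTensor_add (M N : Matrix (Fin 4) (Fin 4) F) :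
    toTensor (M + N) = toTensor M + toTensor N := by
  ext i j; simp [toTensor]

lemma toTensor_smul (c : F) (M : Matrix (Fin 4) (Fin 4) F) :
    toTensor (c • M) = c • toTensor M := by
  ext i j; simp [toTensor]

lemma m12_mul (M N : Matrix (Fin 4) (Fin 4) F) : m12 (M * N) = m12 M * m12 N := by
  simp [m12, toTensor_mul, ← Matrix.mul_kronecker_mul, Matrix.reindex_apply,
    Matrix.submatrix_mul_equiv]

lemma m12_one : m12 (1 : Matrix (Fin 4) (Fin 4) F) = 1 := by
  simp [m12, toTensor_one]

lemma m12_sub (M N : Matrix (Fin 4) (Fin 4) F) : m12 (M - N) = m12 M - m12 N := by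
  ext i j; simp [m12, toTensor_sub, sub_mul]

lemma m12_add (M N : Matrix (Fin 4) (Fin 4) F) : m12 (M + N) = m12 M + m12 N := by
  ext i j; simp [m12, toTensor_add, add_mul]

lemma m12_smul (c : F) (M : Matrix (Fin 4) (Fin 4) F) : m12 (c • M) = c • m12 M := by
  ext i j; simp [m12, toTensor_smul]; ring

lemma m23_mul (M N : Matrix (Fin 4) (Fin 4) F) : m23 (M * N) = m23 M * m23 N := by
  simp [m23, toTensor_mul, ← Matrix.mul_kronecker_mul]

lemma m23_one : m23 (1 : Matrix (Fin 4) (Fin 4) F) = 1 := by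
  simp [m23, toTensor_one]

lemma m23_sub (M N : Matrix (Fin 4) (Fin 4) F) : m23 (M - N) = m23 M - m23 N := by
  ext i j; simp [m23, toTensor_sub, mul_sub]

lemma m23_add (M N : Matrix (Fin 4) (Fin 4) F) : m23 (M + N) = m23 M + m23 N := by
  ext i j; simp [m23, toTensor_add, mul_add]

lemma m23_smul (c : F) (M : Matrix (Fin 4) (Fin 4) F) : m23 (c • M) = c • m23 M := by
  ext i j; simp [m23, toTensor_smul]; ring

end Aux

theorem stmt11 {F : Type*} [CommRing F] (R : Matrix (Fin 4) (Fin 4) F)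
    (lam X mu : F)
    (hMBE : m12 R * m23 R * m12 R - m23 R * m12 R * m23 R =
      lam • (m23 R - m12 R))
    (hHecke : R * R = X • R + (1 - X) • (1 : Matrix (Fin 4) (Fin 4) F)) :
    let S : Matrix (Fin 4) (Fin 4) F := R - mu • (1 : Matrix (Fin 4) (Fin 4) F)
    m12 S * m23 S * m12 S - m23 S * m12 S * m23 S =
      (lam + X * mu - mu ^ 2) • (m23 S - m12 S) := by
  intro S
  have h12 : m12 S = m12 R - mu • 1 := by rw [m12_sub, m12_smul, m12_one]
  have h23 : m23 S = m23 R - mu • 1 := by rw [m23_sub, m23_smul, m23_one]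
  set A := m12 R with hA
  set B := m23 R with hB
  have hA2 : A * A = X • A + (1 - X) • 1 := by
    rw [hA, ← m12_mul, hHecke, m12_add, m12_smul, m12_smul, m12_one]
  have hB2 : B * B = X • B + (1 - X) • 1 := by
    rw [hB, ← m23_mul, hHecke, m23_add, m23_smul, m23_smul, m23_one]
  rw [h12, h23]
  have expand : (A - mu • 1) * (B - mu • 1) * (A - mu • 1) -
      (B - mu • 1) * (A - mu • 1) * (B - mu • 1) =
      (A * B * A - B * A * B) - mu • (A * A - B * B) + (mu * mu) • (A - B) := by
    simp only [sub_mul, mul_sub, smul_mul_assoc, mul_smul_comm, smul_smul,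
      one_mul, mul_one, smul_sub, smul_add]
    module
  rw [expand, hMBE, hA2, hB2]
  have : (X • A + (1 - X) • (1 : Matrix (Fin 2 × Fin 2 × Fin 2) (Fin 2 × Fin 2 × Fin 2) F)) -
      (X • B + (1 - X) • 1) = X • (A - B) := by module
  rw [this]
  have : (B - mu • (1 : Matrix (Fin 2 × Fin 2 × Fin 2) (Fin 2 × Fin 2 × Fin 2) F)) -
      (A - mu • 1) = B - A := by abel
  rw [this]
  match_scalars <;> ring
end
end

section
/- In the associative algebra generated by x, y, ξ, η subject to the (K;p,q)-plane relations — p·x·y = y·x, ξ² = 0, η² = 0, η·ξ + q·ξ·η = 0, (1−X)·x·ξ = ξ·x, (1−X)·x·η = ξ·y + (K/p)·Φ₁, (1−X)·y·ξ = η·x − (Kq/p)·Φ₁, (1−X)·y·η = η·y, where Φ₁ = η·x − p·ξ·y and 1−X = K(1 + q/p) − 1 — the element Φ₁ is nilpotent: Φ₁² = 0. -/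
/-!
With `c = 1 - X = K(1 + q/p) - 1`, the mixed relations make `x` and `y` commute with `Φ₁` up to
scalars: `c·xΦ₁ = (K/p)·Φ₁x` and `c·yΦ₁ = p(Kq/p)·Φ₁y`. On the other side `ξ² = η² = 0` and
`ηξ = -qξη` give `ξΦ₁ = ξηx` and `ηΦ₁ = pq·ξηy`. Hence, using `yx = pxy`,
`c·Φ₁² = η(c·xΦ₁) - pξ(c·yΦ₁) = p²(q·K/p - Kq/p)·ξηxy = 0`, and `c` is invertible.
-/

noncomputable section

/-- Generators: `0 = x`, `1 = y`, `2 = ξ`, `3 = η`. -/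
abbrev FA (F : Type*) [Field F] := FreeAlgebra F (Fin 4)

/-- The defining relations of the `(K;p,q)`-deformed plane, with
`1 - X = K(1 + q/p) - 1`. -/
inductive PlaneRel (F : Type*) [Field F] (p q K : F) : FA F → FA F → Prop
  | xy : PlaneRel F p q K
      (algebraMap F (FA F) p * (FreeAlgebra.ι F 0 * FreeAlgebra.ι F 1))
      (FreeAlgebra.ι F 1 * FreeAlgebra.ι F 0)
  | xixi : PlaneRel F p q K (FreeAlgebra.ι F 2 * FreeAlgebra.ι F 2) 0
  | etaeta : PlaneRel F p q K (FreeAlgebra.ι F 3 * FreeAlgebra.ι F 3) 0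
  | etaxi : PlaneRel F p q K
      (FreeAlgebra.ι F 3 * FreeAlgebra.ι F 2 +
        algebraMap F (FA F) q * (FreeAlgebra.ι F 2 * FreeAlgebra.ι F 3)) 0
  | xxi : PlaneRel F p q K
      (algebraMap F (FA F) (K * (1 + q / p) - 1) *
        (FreeAlgebra.ι F 0 * FreeAlgebra.ι F 2))
      (FreeAlgebra.ι F 2 * FreeAlgebra.ι F 0)
  | xeta : PlaneRel F p q K
      (algebraMap F (FA F) (K * (1 + q / p) - 1) *
        (FreeAlgebra.ι F 0 * FreeAlgebra.ι F 3))
      (FreeAlgebra.ι F 2 * FreeAlgebra.ι F 1 +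
        algebraMap F (FA F) (K / p) *
          (FreeAlgebra.ι F 3 * FreeAlgebra.ι F 0 -
            algebraMap F (FA F) p * (FreeAlgebra.ι F 2 * FreeAlgebra.ι F 1)))
  | yxi : PlaneRel F p q K
      (algebraMap F (FA F) (K * (1 + q / p) - 1) *
        (FreeAlgebra.ι F 1 * FreeAlgebra.ι F 2))
      (FreeAlgebra.ι F 3 * FreeAlgebra.ι F 0 -
        algebraMap F (FA F) (K * q / p) *
          (FreeAlgebra.ι F 3 * FreeAlgebra.ι F 0 -
            algebraMap F (FA F) p * (FreeAlgebra.ι F 2 * FreeAlgebra.ι F 1)))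
  | yeta : PlaneRel F p q K
      (algebraMap F (FA F) (K * (1 + q / p) - 1) *
        (FreeAlgebra.ι F 1 * FreeAlgebra.ι F 3))
      (FreeAlgebra.ι F 3 * FreeAlgebra.ι F 1)

section KPlane

variable {R A : Type*} [CommRing R] [Ring A] [Algebra R A]

def planePhi (p : R) (x y ξ η : A) : A := η * x - p • (ξ * y)

/-- The `(K;p,q)`-plane relations, with `c = 1 - X`, `u = K/p`, `v = Kq/p` and `Φ₁ = planePhi`. -/
structure IsKPlane (p q c u v : R) (x y ξ η : A) : Prop where
  yx : y * x = p • (x * y)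
  ξξ : ξ * ξ = 0
  ηη : η * η = 0
  ηξ : η * ξ = -(q • (ξ * η))
  xξ : c • (x * ξ) = ξ * x
  xη : c • (x * η) = ξ * y + u • planePhi p x y ξ η
  yξ : c • (y * ξ) = η * x - v • planePhi p x y ξ η
  yη : c • (y * η) = η * y

namespace IsKPlane

variable {p q c u v : R} {x y ξ η : A}

theorem smul_x_mul_planePhi (h : IsKPlane p q c u v x y ξ η) :
    c • (x * planePhi p x y ξ η) = u • (planePhi p x y ξ η * x) := by
  have hxηx : c • (x * η * x) = ξ * y * x + u • (planePhi p x y ξ η * x) := by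
    rw [← smul_mul_assoc, h.xη, add_mul, smul_mul_assoc]
  have hxξy : c • (x * ξ * y) = ξ * x * y := by rw [← smul_mul_assoc, h.xξ]
  calc c • (x * planePhi p x y ξ η)
      = c • (x * η * x) - p • c • (x * ξ * y) := by
        simp only [planePhi, mul_sub, mul_smul_comm, mul_assoc, smul_sub, smul_comm c p]
    _ = u • (planePhi p x y ξ η * x) := by
        rw [hxηx, hxξy, mul_assoc ξ y, h.yx, mul_smul_comm, ← mul_assoc, add_sub_cancel_left]

theorem smul_y_mul_planePhi (h : IsKPlane p q c u v x y ξ η) :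
    c • (y * planePhi p x y ξ η) = (p * v) • (planePhi p x y ξ η * y) := by
  have hyηx : c • (y * η * x) = η * y * x := by rw [← smul_mul_assoc, h.yη]
  have hyξy : c • (y * ξ * y) = η * x * y - v • (planePhi p x y ξ η * y) := by
    rw [← smul_mul_assoc, h.yξ, sub_mul, smul_mul_assoc]
  calc c • (y * planePhi p x y ξ η)
      = c • (y * η * x) - p • c • (y * ξ * y) := by
        simp only [planePhi, mul_sub, mul_smul_comm, mul_assoc, smul_sub, smul_comm c p]
    _ = (p * v) • (planePhi p x y ξ η * y) := by
        rw [hyηx, hyξy, mul_assoc η y, h.yx, mul_smul_comm, ← mul_assoc, smul_sub,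
          sub_sub_cancel, smul_smul]

theorem ξ_mul_planePhi (h : IsKPlane p q c u v x y ξ η) :
    ξ * planePhi p x y ξ η = ξ * η * x := by
  rw [planePhi, mul_sub, mul_smul_comm, ← mul_assoc, ← mul_assoc, h.ξξ, zero_mul, smul_zero,
    sub_zero]

theorem η_mul_planePhi (h : IsKPlane p q c u v x y ξ η) :
    η * planePhi p x y ξ η = (p * q) • (ξ * η * y) := by
  rw [planePhi, mul_sub, mul_smul_comm, ← mul_assoc, ← mul_assoc, h.ηη, zero_mul, zero_sub,
    h.ηξ, neg_mul, smul_neg, neg_neg, smul_mul_assoc, smul_smul]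

theorem planePhi_mul_self_eq_zero (h : IsKPlane p q c u v x y ξ η) (hc : IsUnit c)
    (huv : v = u * q) : planePhi p x y ξ η * planePhi p x y ξ η = 0 := by
  have hxΦ := h.smul_x_mul_planePhi
  have hyΦ := h.smul_y_mul_planePhi
  have hyx : ξ * η * y * x = p • (ξ * η * x * y) := by
    rw [mul_assoc _ y, h.yx, mul_smul_comm, ← mul_assoc]
  set Φ := planePhi p x y ξ η
  rw [← hc.smul_eq_zero]
  calc c • (Φ * Φ) = η * (c • (x * Φ)) - p • ξ * (c • (y * Φ)) := by
        simp only [Φ, planePhi, sub_mul, mul_smul_comm, smul_mul_assoc, mul_assoc, smul_sub,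
          smul_comm c p]
    _ = u • (η * Φ * x) - (p * p * v) • (ξ * Φ * y) := by
        rw [hxΦ, hyΦ, mul_smul_comm, mul_smul_comm, smul_mul_assoc, smul_smul,
          mul_right_comm p v p]
        simp only [mul_assoc]
    _ = (u * (p * q) * p - p * p * v) • (ξ * η * x * y) := by
        rw [h.η_mul_planePhi, h.ξ_mul_planePhi, smul_mul_assoc, hyx, smul_smul, smul_smul,
          sub_smul]
    _ = 0 := by rw [huv, show u * (p * q) * p - p * p * (u * q) = 0 by ring, zero_smul]

end IsKPlane

end KPlane

theorem isKPlane_planeRel {F : Type*} [Field F] (p q K : F) :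
    IsKPlane p q (K * (1 + q / p) - 1) (K / p) (K * q / p)
      (RingQuot.mkAlgHom F (PlaneRel F p q K) (FreeAlgebra.ι F 0))
      (RingQuot.mkAlgHom F (PlaneRel F p q K) (FreeAlgebra.ι F 1))
      (RingQuot.mkAlgHom F (PlaneRel F p q K) (FreeAlgebra.ι F 2))
      (RingQuot.mkAlgHom F (PlaneRel F p q K) (FreeAlgebra.ι F 3)) := by
  have rel {a b : FA F} (r : PlaneRel F p q K a b) := RingQuot.mkAlgHom_rel F r
  have r1 := rel .xy
  have r2 := rel .xixi
  have r3 := rel .etaeta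
  have r4 := rel .etaxi
  have r5 := rel .xxi
  have r6 := rel .xeta
  have r7 := rel .yxi
  have r8 := rel .yeta
  simp only [← Algebra.smul_def] at r1 r2 r3 r4 r5 r6 r7 r8
  simp only [map_smul, map_mul, map_add, map_sub, map_zero] at r1 r2 r3 r4 r5 r6 r7 r8
  exact ⟨r1.symm, r2, r3, eq_neg_of_add_eq_zero_left r4, r5, r6, r7, r8⟩

theorem stmt16_general {F : Type*} [Field F] (p q K : F)
    (hX : K * (1 + q / p) - 1 ≠ 0) :
    let Phi1 : RingQuot (PlaneRel F p q K) :=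
      RingQuot.mkRingHom (PlaneRel F p q K)
        (FreeAlgebra.ι F 3 * FreeAlgebra.ι F 0 -
          algebraMap F (FA F) p * (FreeAlgebra.ι F 2 * FreeAlgebra.ι F 1))
    Phi1 * Phi1 = 0 := by
  intro Phi1
  have hPhi : Phi1 = planePhi p
      (RingQuot.mkAlgHom F (PlaneRel F p q K) (FreeAlgebra.ι F 0))
      (RingQuot.mkAlgHom F (PlaneRel F p q K) (FreeAlgebra.ι F 1))
      (RingQuot.mkAlgHom F (PlaneRel F p q K) (FreeAlgebra.ι F 2))
      (RingQuot.mkAlgHom F (PlaneRel F p q K) (FreeAlgebra.ι F 3)) := by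
    rw [planePhi, ← map_mul, ← map_mul, ← map_smul, ← map_sub, Algebra.smul_def]
    exact DFunLike.congr_fun (RingQuot.mkAlgHom_coe F (PlaneRel F p q K)).symm _
  rw [hPhi]
  exact (isKPlane_planeRel p q K).planePhi_mul_self_eq_zero (isUnit_iff_ne_zero.mpr hX)
    (by ring)

theorem stmt16 {F : Type*} [Field F] (p q K : F) (hp : p ≠ 0)
    (hX : K * (1 + q / p) - 1 ≠ 0) :
    let Phi1 : RingQuot (PlaneRel F p q K) :=
      RingQuot.mkRingHom (PlaneRel F p q K)
        (FreeAlgebra.ι F 3 * FreeAlgebra.ι F 0 -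
          algebraMap F (FA F) p * (FreeAlgebra.ι F 2 * FreeAlgebra.ι F 1))
    Phi1 * Phi1 = 0 :=
  stmt16_general p q K hX
end
end

section
/- If T = [[a,b],[c,d]] has entries satisfying the (p,q)-group relations (ab=qba, pac=ca, ad=da+(q−p)bc, pqbc=cb, pbd=db, cd=qdc), then for any scalar K the matrix R(K;p,q) = P·R̂(K;p,q) satisfies the RTT relation R·T₁·T₂ = T₂·T₁·R, where T₁ = T⊗I₂ and T₂ = I₂⊗T as 4×4 matrices with entries in the algebra. -/
open Matrix Kronecker

noncomputable section

lemma PRpq {F : Type*} [Field F] (K p q : F) :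
    Pflip * Rpq K p q =
      !![1, 0, 0, 0;
         0, K * q, 1 - K * q / p, 0;
         0, 1 - K, K / p, 0;
         0, 0, 0, 1] := by
  ext i j
  fin_cases i <;> fin_cases j <;>
    simp [Pflip, Rpq, Matrix.mul_apply, Fin.sum_univ_four, Matrix.vecHead, Matrix.vecTail]

lemma es0 : e22.symm 0 = (0, 0) := rfl
lemma es1 : e22.symm 1 = (0, 1) := rfl
lemma es2 : e22.symm 2 = (1, 0) := rfl
lemma es3 : e22.symm 3 = (1, 1) := rfl

lemma kronR {A : Type*} [Ring A] (a b c d : A) :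
    Matrix.reindex e22 e22 ((!![a, b; c, d]) ⊗ₖ (1 : Matrix (Fin 2) (Fin 2) A)) =
    !![a, 0, b, 0; 0, a, 0, b; c, 0, d, 0; 0, c, 0, d] := by
  ext i j
  fin_cases i <;> fin_cases j <;>
    simp [Matrix.reindex_apply, Matrix.submatrix_apply, es0, es1, es2, es3,
      Matrix.one_apply, Matrix.vecHead, Matrix.vecTail]

lemma kronL {A : Type*} [Ring A] (a b c d : A) :
    Matrix.reindex e22 e22 ((1 : Matrix (Fin 2) (Fin 2) A) ⊗ₖ (!![a, b; c, d])) =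
    !![a, b, 0, 0; c, d, 0, 0; 0, 0, a, b; 0, 0, c, d] := by
  ext i j
  fin_cases i <;> fin_cases j <;>
    simp [Matrix.reindex_apply, Matrix.submatrix_apply, es0, es1, es2, es3,
      Matrix.one_apply, Matrix.vecHead, Matrix.vecTail]

lemma mul_alg {F A : Type*} [CommSemiring F] [Semiring A] [Algebra F A] (r : F) (x : A) :
    x * algebraMap F A r = r • x := by rw [← Algebra.commutes, ← Algebra.smul_def]

lemma reindex_mul_s18 {A : Type*} [Ring A] (M N : Matrix (Fin 2 × Fin 2) (Fin 2 × Fin 2) A) :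
    Matrix.reindex e22 e22 (M * N) = Matrix.reindex e22 e22 M * Matrix.reindex e22 e22 N := by
  simp only [Matrix.reindex_apply]
  exact (Matrix.submatrix_mul_equiv M N _ e22.symm _).symm

set_option maxHeartbeats 4000000 in
theorem stmt18 {F : Type*} [Field F] {A : Type*} [Ring A] [Algebra F A]
    (p q K : F) (hp : p ≠ 0) (hq : q ≠ 0) (a b c d : A)
    (h1 : a * b = algebraMap F A q * (b * a))
    (h2 : algebraMap F A p * (a * c) = c * a)
    (h3 : a * d = d * a + algebraMap F A (q - p) * (b * c))
    (h4 : algebraMap F A (p * q) * (b * c) = c * b)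
    (h5 : algebraMap F A p * (b * d) = d * b)
    (h6 : c * d = algebraMap F A q * (d * c)) :
    let T : Matrix (Fin 2) (Fin 2) A := !![a, b; c, d]
    let T1 : Matrix (Fin 2 × Fin 2) (Fin 2 × Fin 2) A :=
      T ⊗ₖ (1 : Matrix (Fin 2) (Fin 2) A)
    let T2 : Matrix (Fin 2 × Fin 2) (Fin 2 × Fin 2) A :=
      (1 : Matrix (Fin 2) (Fin 2) A) ⊗ₖ T
    let R : Matrix (Fin 2 × Fin 2) (Fin 2 × Fin 2) A :=
      toTensor ((Pflip * Rpq K p q).map (algebraMap F A))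
    R * T1 * T2 = T2 * T1 * R := by
  intro T T1 T2 R
  have h1' : a * b = q • (b * a) := by rw [Algebra.smul_def]; exact h1
  have h2' : p • (a * c) = c * a := by rw [Algebra.smul_def]; exact h2
  have h3' : a * d = d * a + (q - p) • (b * c) := by rw [Algebra.smul_def]; exact h3
  have h4' : (p * q) • (b * c) = c * b := by rw [Algebra.smul_def]; exact h4
  have h5' : p • (b * d) = d * b := by rw [Algebra.smul_def]; exact h5
  have h6' : c * d = q • (d * c) := by rw [Algebra.smul_def]; exact h6
  apply (Matrix.reindex e22 e22).injective
  rw [reindex_mul_s18, reindex_mul_s18, reindex_mul_s18, reindex_mul_s18]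
  have hR : Matrix.reindex e22 e22 R
      = (Pflip * Rpq K p q).map (algebraMap F A) := by
    simp [R, toTensor]
  have hT1 : Matrix.reindex e22 e22 T1
      = !![a, 0, b, 0; 0, a, 0, b; c, 0, d, 0; 0, c, 0, d] := kronR a b c d
  have hT2 : Matrix.reindex e22 e22 T2
      = !![a, b, 0, 0; c, d, 0, 0; 0, 0, a, b; 0, 0, c, d] := kronL a b c d
  rw [hR, hT1, hT2, PRpq]
  ext i j
  fin_cases i <;> fin_cases j <;>
    simp [Matrix.mul_apply, Fin.sum_univ_four, Matrix.vecHead, Matrix.vecTail] <;>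
    (try rfl) <;>
    try simp only [mul_sub, sub_mul, add_mul, mul_add, _root_.map_mul, mul_one, one_mul, mul_assoc, mul_alg, ← Algebra.smul_def, mul_smul_comm,
      smul_mul_assoc, smul_add, smul_smul, h1', h3', ← h2', ← h4', ← h5', h6'] <;>
    (try rfl) <;>
    match_scalars <;> (first | ring1 | (field_simp; try ring1))
end
end
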